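/- Let X be a compactum (a compact perfect metric space with more than one point), let n ≥ 2 be an integer, and let f : X → X be a continuous map. Then F_n(f) is fully exact if and only if SF_n(f) is fully exact; moreover, if F_n(f) is fully exact, then f is fully exact. -/

import Mathlib

open Metric Set TopologicalSpace

variable (X : Type*) [MetricSpace X] (n : ℕ)

/-- The `n`-fold symmetric product `F_n(X)`: nonempty subsets of `X` with at most `n`
points, as a subspace of the nonempty compact subsets of `X` with the Hausdorff metric. -/
abbrev Fn := {A : NonemptyCompacts X // (A : Set X).Finite ∧ (A : Set X).ncard ≤ n}

/-- The induced map `F_n(f)` on the `n`-fold symmetric product, `A ↦ f(A)`. -/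
noncomputable def FnMap (f : X → X) : Fn X n → Fn X n := fun A =>
  ⟨⟨⟨f '' (A.1 : Set X), (A.2.1.image f).isCompact⟩, A.1.nonempty.image f⟩,
    A.2.1.image f, le_trans (Set.ncard_image_le A.2.1) A.2.2⟩

/-- `F_1(X) ⊆ F_n(X)`: the set of singletons. -/
def F1 : Set (Fn X n) := {A | ∃ x : X, (A.1 : Set X) = {x}}

/-- The setoid collapsing `F_1(X)` to a point. -/
def SFnSetoid : Setoid (Fn X n) where
  r A B := A = B ∨ (A ∈ F1 X n ∧ B ∈ F1 X n)
  iseqv := by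
    refine ⟨fun _ => Or.inl rfl, fun h => h.imp Eq.symm And.symm, fun h₁ h₂ => ?_⟩
    rcases h₁ with rfl | h₁
    · exact h₂
    · rcases h₂ with rfl | h₂
      · exact Or.inr h₁
      · exact Or.inr ⟨h₁.1, h₂.2⟩

/-- The `n`-fold symmetric product suspension `SF_n(X) = F_n(X)/F_1(X)`,
with the quotient topology. -/
abbrev SFn := Quotient (SFnSetoid X n)

/-- The quotient map `q : F_n(X) → SF_n(X)`. -/
def SFnQ : Fn X n → SFn X n := Quotient.mk (SFnSetoid X n)

/-- The induced map `SF_n(f)` on the suspension, with `SF_n(f) ∘ q = q ∘ F_n(f)`. -/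
noncomputable def SFnMap (f : X → X) : SFn X n → SFn X n :=
  Quotient.lift (fun A => SFnQ X n (FnMap X n f A))
    (fun A B h => Quotient.sound (by
      rcases h with rfl | ⟨⟨x, hx⟩, ⟨y, hy⟩⟩
      · exact Or.inl rfl
      · exact Or.inr ⟨⟨f x, by simp [FnMap, hx]⟩, ⟨f y, by simp [FnMap, hy]⟩⟩))

/-- The metric `ρ` on `SF_n(X)`:
`ρ(χ₁,χ₂) = H(F_1(X) ∪ q⁻¹(χ₁), F_1(X) ∪ q⁻¹(χ₂))` where `H` is the Hausdorff
distance between subsets of `F_n(X)`. -/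
noncomputable def SFnDist : SFn X n → SFn X n → ℝ := fun a b =>
  Metric.hausdorffDist (F1 X n ∪ SFnQ X n ⁻¹' {a}) (F1 X n ∪ SFnQ X n ⁻¹' {b})

/-- `g` is fully exact: for all nonempty open `U, V` there is `k` with
`int(g^k(U) ∩ g^k(V)) ≠ ∅`. -/
def FullyExact {Z : Type*} [TopologicalSpace Z] (g : Z → Z) : Prop :=
  ∀ U V : Set Z, IsOpen U → IsOpen V → U.Nonempty → V.Nonempty →
    ∃ k : ℕ, 0 < k ∧ (interior (g^[k] '' U ∩ g^[k] '' V)).Nonempty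

/- The quotient map `q` is injective off the closed set `F_1(X)` of singletons, and for `n ≥ 2`
and `X` perfect the complement of `F_1(X)` is dense in `F_n(X)` (double a point of a singleton).
So, after removing `F_1(X)`, open sets and images under iterates correspond exactly under `q`,
and interiors of intersections transfer in both directions. If `F_n(f)` is fully exact, apply
it to the open sets `⟨U⟩ = {A | A ⊆ U}`; near any point `a` of a set `A` in the resulting
interior, replacing `a` by a nearby `z` stays in it, which puts `z` in `f^k(U) ∩ f^k(V)`. -/

lemma Metric.hausdorffDist_insert_le {X : Type*} [PseudoMetricSpace X] {A B : Set X} {a z : X}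
    (ha : a ∈ A) (hBA : B ⊆ A) (hAB : A \ {a} ⊆ B) :
    hausdorffDist (insert z B) A ≤ dist z a := by
  refine hausdorffDist_le_of_mem_dist dist_nonneg (fun p hp => ?_) (fun p hp => ?_)
  · rcases hp with rfl | hp
    · exact ⟨a, ha, le_rfl⟩
    · exact ⟨p, hBA hp, by simp⟩
  · by_cases hpa : p = a
    · exact ⟨z, mem_insert z B, by rw [hpa, dist_comm]⟩
    · exact ⟨p, mem_insert_of_mem z (hAB ⟨hp, hpa⟩), by simp⟩

section SymmetricProduct

variable {X : Type*} [MetricSpace X] {n : ℕ}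

def Fn.ofFinite (S : Set X) (hS : S.Finite) (hne : S.Nonempty) (hcard : S.ncard ≤ n) :
    Fn X n :=
  ⟨⟨⟨S, hS.isCompact⟩, hne⟩, hS, hcard⟩

@[simp]
lemma Fn.val_ofFinite (S : Set X) (hS : S.Finite) (hne : S.Nonempty) (hcard : S.ncard ≤ n) :
    ((Fn.ofFinite S hS hne hcard).1 : Set X) = S :=
  rfl

lemma Fn.dist_eq (A B : Fn X n) : dist A B = hausdorffDist (A.1 : Set X) B.1 :=
  rfl

lemma Fn.exists_dist_lt_of_dist_lt {A B : Fn X n} {x : X} {r : ℝ} (hx : x ∈ (A.1 : Set X))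
    (h : dist A B < r) : ∃ y ∈ (B.1 : Set X), dist x y < r :=
  exists_dist_lt_of_hausdorffDist_lt hx h <|
    hausdorffEDist_ne_top_of_nonempty_of_bounded A.1.nonempty B.1.nonempty
      A.1.isCompact.isBounded B.1.isCompact.isBounded

lemma Fn.exists_mem_dist_le (A : Fn X n) {a : X} (ha : a ∈ (A.1 : Set X)) (z : X) :
    ∃ B : Fn X n, z ∈ (B.1 : Set X) ∧ dist B A ≤ dist z a := by
  have hcard : (insert z ((A.1 : Set X) \ {a})).ncard ≤ n := by
    have := ncard_sdiff_singleton_add_one ha A.2.1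
    have := ncard_insert_le z ((A.1 : Set X) \ {a})
    have := A.2.2
    omega
  exact ⟨Fn.ofFinite _ (A.2.1.sdiff.insert z) (insert_nonempty _ _) hcard, mem_insert z _,
    hausdorffDist_insert_le ha sdiff_subset subset_rfl⟩

lemma isClosed_F1 : IsClosed (F1 X n) := by
  refine isOpen_compl_iff.1 (Metric.isOpen_iff.2 fun A hA => ?_)
  obtain ⟨x, hx, y, hy, hxy⟩ : (A.1 : Set X).Nontrivial :=
    (A.1.nonempty.exists_eq_singleton_or_nontrivial).resolve_left fun ⟨x, hx⟩ => hA ⟨x, hx⟩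
  refine ⟨dist x y / 2, half_pos (dist_pos.2 hxy), fun B hB ⟨z, hz⟩ => ?_⟩
  rw [mem_ball, dist_comm] at hB
  obtain ⟨x', hx', hxx'⟩ := Fn.exists_dist_lt_of_dist_lt hx hB
  obtain ⟨y', hy', hyy'⟩ := Fn.exists_dist_lt_of_dist_lt hy hB
  rw [hz, mem_singleton_iff] at hx' hy'
  rw [hx'] at hxx'
  rw [hy'] at hyy'
  linarith [dist_triangle_right x y z]

lemma dense_compl_F1 [PerfectSpace X] (hn : 2 ≤ n) : Dense (F1 X n)ᶜ := by
  refine Metric.dense_iff.2 fun A r hr => ?_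
  by_cases hA : A ∈ F1 X n
  swap
  · exact ⟨A, mem_ball_self hr, hA⟩
  obtain ⟨x, hx⟩ := hA
  obtain ⟨y, hyx, hy⟩ : ({x}ᶜ ∩ ball x r).Nonempty :=
    Filter.nonempty_of_mem (inter_mem_nhdsWithin {x}ᶜ (ball_mem_nhds x hr))
  have hcard : ({y, x} : Set X).ncard ≤ n := (ncard_pair hyx).le.trans hn
  refine ⟨Fn.ofFinite {y, x} (toFinite _) (insert_nonempty y {x}) hcard, ?_, ?_⟩
  · rw [mem_ball, Fn.dist_eq, Fn.val_ofFinite, hx]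
    exact (hausdorffDist_insert_le (mem_singleton x) subset_rfl sdiff_subset).trans_lt hy
  · rintro ⟨z, hz⟩
    have hz' := (eq_singleton_iff_unique_mem.1 hz).2
    exact hyx ((hz' y (mem_insert y {x})).trans (hz' x (mem_insert_of_mem y rfl)).symm)

lemma isOpen_setOf_val_subset {U : Set X} (hU : IsOpen U) :
    IsOpen {A : Fn X n | (A.1 : Set X) ⊆ U} := by
  refine Metric.isOpen_iff.2 fun A hA => ?_
  obtain ⟨r, hr, hthick⟩ := A.1.isCompact.exists_thickening_subset_open hU hA
  refine ⟨r, hr, fun B hB z hz => hthick ?_⟩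
  obtain ⟨w, hw, hzw⟩ := Fn.exists_dist_lt_of_dist_lt hz (mem_ball.1 hB)
  exact mem_thickening_iff.2 ⟨w, hw, hzw⟩

lemma val_fnMap_iterate (f : X → X) (k : ℕ) (A : Fn X n) :
    (((FnMap X n f)^[k] A).1 : Set X) = f^[k] '' (A.1 : Set X) := by
  rw [image_iterate_eq]
  exact (Function.Semiconj.iterate_right (f := fun A : Fn X n => (A.1 : Set X))
    (fun _ => rfl) k) A

lemma sfnQ_eq_sfnQ_iff {A B : Fn X n} (hB : B ∉ F1 X n) : SFnQ X n A = SFnQ X n B ↔ A = B :=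
  ⟨fun h => (Quotient.exact h).resolve_right fun h' => hB h'.2, congrArg _⟩

lemma preimage_image_sfnQ_inter_compl_F1 (S : Set (Fn X n)) :
    SFnQ X n ⁻¹' (SFnQ X n '' S) ∩ (F1 X n)ᶜ = S ∩ (F1 X n)ᶜ := by
  ext A
  refine ⟨fun ⟨⟨B, hB, hBA⟩, hA⟩ => ⟨(sfnQ_eq_sfnQ_iff hA).1 hBA ▸ hB, hA⟩,
    fun ⟨hA, hA'⟩ => ⟨mem_image_of_mem _ hA, hA'⟩⟩

lemma preimage_image_sfnQ_of_subset {S : Set (Fn X n)} (hS : S ⊆ (F1 X n)ᶜ) :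
    SFnQ X n ⁻¹' (SFnQ X n '' S) = S := by
  refine Subset.antisymm (fun A ⟨B, hB, hBA⟩ => ?_) (subset_preimage_image _ _)
  rwa [(sfnQ_eq_sfnQ_iff (hS hB)).1 hBA.symm]

lemma isOpen_image_sfnQ {S : Set (Fn X n)} (hS : IsOpen S) (hS1 : S ⊆ (F1 X n)ᶜ) :
    IsOpen (SFnQ X n '' S) :=
  isOpen_coinduced.2 <| (preimage_image_sfnQ_of_subset hS1).symm ▸ hS

lemma continuous_sfnQ : Continuous (SFnQ X n) :=
  continuous_quot_mk

lemma surjective_sfnQ : Function.Surjective (SFnQ X n) :=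
  Quot.exists_rep

lemma image_sfnQ_image_fnMap_iterate (f : X → X) (k : ℕ) (S : Set (Fn X n)) :
    SFnQ X n '' ((FnMap X n f)^[k] '' S) = (SFnMap X n f)^[k] '' (SFnQ X n '' S) := by
  rw [image_iterate_eq, image_iterate_eq]
  exact (Function.Semiconj.set_image (f := SFnQ X n) (fun _ => rfl)).iterate_right k S

end SymmetricProduct

section FullyExact

variable {X : Type*} [MetricSpace X] {n : ℕ} {f : X → X}

theorem FullyExact.sfnMap (hF1 : Dense (F1 X n)ᶜ) (h : FullyExact (FnMap X n f)) :
    FullyExact (SFnMap X n f) := by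
  intro U V hU hV hUne hVne
  obtain ⟨k, hk, hW⟩ := h _ _ (hU.preimage continuous_sfnQ) (hV.preimage continuous_sfnQ)
    (hUne.preimage surjective_sfnQ) (hVne.preimage surjective_sfnQ)
  set W := interior ((FnMap X n f)^[k] '' (SFnQ X n ⁻¹' U) ∩
    (FnMap X n f)^[k] '' (SFnQ X n ⁻¹' V))
  have hmaps (U : Set (SFn X n)) :
      SFnQ X n '' ((FnMap X n f)^[k] '' (SFnQ X n ⁻¹' U)) ⊆ (SFnMap X n f)^[k] '' U := by
    rw [image_sfnQ_image_fnMap_iterate]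
    exact image_mono (image_preimage_subset _ _)
  have hsub : SFnQ X n '' (W ∩ (F1 X n)ᶜ) ⊆
      (SFnMap X n f)^[k] '' U ∩ (SFnMap X n f)^[k] '' V := by
    rintro _ ⟨A, ⟨hA, -⟩, rfl⟩
    exact ⟨hmaps U (mem_image_of_mem _ (interior_subset hA).1),
      hmaps V (mem_image_of_mem _ (interior_subset hA).2)⟩
  have hopen : IsOpen (SFnQ X n '' (W ∩ (F1 X n)ᶜ)) :=
    isOpen_image_sfnQ (isOpen_interior.inter isClosed_F1.isOpen_compl) inter_subset_right
  exact ⟨k, hk, ((hF1.inter_open_nonempty W isOpen_interior hW).image _).mono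
    (interior_maximal hsub hopen)⟩

theorem FullyExact.of_sfnMap (hF1 : Dense (F1 X n)ᶜ) (h : FullyExact (SFnMap X n f)) :
    FullyExact (FnMap X n f) := by
  intro U V hU hV hUne hVne
  have hopen (U : Set (Fn X n)) (hU : IsOpen U) : IsOpen (SFnQ X n '' (U ∩ (F1 X n)ᶜ)) :=
    isOpen_image_sfnQ (hU.inter isClosed_F1.isOpen_compl) inter_subset_right
  obtain ⟨k, hk, hW⟩ := h _ _ (hopen U hU) (hopen V hV)
    ((hF1.inter_open_nonempty U hU hUne).image _) ((hF1.inter_open_nonempty V hV hVne).image _)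
  set W := interior ((SFnMap X n f)^[k] '' (SFnQ X n '' (U ∩ (F1 X n)ᶜ)) ∩
    (SFnMap X n f)^[k] '' (SFnQ X n '' (V ∩ (F1 X n)ᶜ)))
  have hmaps (U : Set (Fn X n)) :
      SFnQ X n ⁻¹' ((SFnMap X n f)^[k] '' (SFnQ X n '' (U ∩ (F1 X n)ᶜ))) ∩ (F1 X n)ᶜ ⊆
        (FnMap X n f)^[k] '' U := by
    rw [← image_sfnQ_image_fnMap_iterate, preimage_image_sfnQ_inter_compl_F1]
    exact inter_subset_left.trans (image_mono inter_subset_left)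
  have hsub : SFnQ X n ⁻¹' W ∩ (F1 X n)ᶜ ⊆ (FnMap X n f)^[k] '' U ∩ (FnMap X n f)^[k] '' V :=
    fun A ⟨hA, hA1⟩ => ⟨hmaps U ⟨(interior_subset hA).1, hA1⟩,
      hmaps V ⟨(interior_subset hA).2, hA1⟩⟩
  have hWq : IsOpen (SFnQ X n ⁻¹' W) := isOpen_interior.preimage continuous_sfnQ
  exact ⟨k, hk, (hF1.inter_open_nonempty _ hWq (hW.preimage surjective_sfnQ)).mono
    (interior_maximal hsub (hWq.inter isClosed_F1.isOpen_compl))⟩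

lemma val_subset_image_of_mem_image_fnMap_iterate {k : ℕ} {U : Set X} {B : Fn X n}
    (hB : B ∈ (FnMap X n f)^[k] '' {A | (A.1 : Set X) ⊆ U}) :
    (B.1 : Set X) ⊆ f^[k] '' U := by
  obtain ⟨A, hA, rfl⟩ := hB
  rw [val_fnMap_iterate]
  exact image_mono hA

theorem FullyExact.of_fnMap (hn : 1 ≤ n) (h : FullyExact (FnMap X n f)) : FullyExact f := by
  intro U V hU hV ⟨x, hx⟩ ⟨y, hy⟩
  have hsing (x : X) : ({x} : Set X).ncard ≤ n := (ncard_singleton x).trans_le hn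
  obtain ⟨k, hk, A, hA⟩ := h _ _ (isOpen_setOf_val_subset hU) (isOpen_setOf_val_subset hV)
    ⟨Fn.ofFinite {x} (toFinite _) (singleton_nonempty x) (hsing x), singleton_subset_iff.2 hx⟩
    ⟨Fn.ofFinite {y} (toFinite _) (singleton_nonempty y) (hsing y), singleton_subset_iff.2 hy⟩
  obtain ⟨ε, hε, hball⟩ := Metric.isOpen_iff.1 isOpen_interior A hA
  obtain ⟨a, ha⟩ := A.1.nonempty
  have hsub : ball a ε ⊆ f^[k] '' U ∩ f^[k] '' V := by
    intro z hz
    obtain ⟨B, hzB, hBA⟩ := A.exists_mem_dist_le ha z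
    obtain ⟨hBU, hBV⟩ := interior_subset (hball (mem_ball.2 (hBA.trans_lt (mem_ball.1 hz))))
    exact ⟨val_subset_image_of_mem_image_fnMap_iterate hBU hzB,
      val_subset_image_of_mem_image_fnMap_iterate hBV hzB⟩
  exact ⟨k, hk, a, interior_maximal hsub isOpen_ball (mem_ball_self hε)⟩

end FullyExact

theorem stmt18_general (X : Type*) [MetricSpace X]
    (hX : Perfect (Set.univ : Set X))
    (n : ℕ) (hn : 2 ≤ n) (f : X → X) :
    (FullyExact (FnMap X n f) ↔ FullyExact (SFnMap X n f)) ∧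
    (FullyExact (FnMap X n f) → FullyExact f) := by
  have : PerfectSpace X := ⟨hX.2⟩
  have hF1 : Dense (F1 X n)ᶜ := dense_compl_F1 hn
  exact ⟨⟨FullyExact.sfnMap hF1, FullyExact.of_sfnMap hF1⟩, FullyExact.of_fnMap (by omega)⟩

theorem stmt18 (X : Type*) [MetricSpace X] [CompactSpace X] [Nontrivial X]
    (hX : Perfect (Set.univ : Set X))
    (n : ℕ) (hn : 2 ≤ n) (f : X → X) (hf : Continuous f) :
    (FullyExact (FnMap X n f) ↔ FullyExact (SFnMap X n f)) ∧
    (FullyExact (FnMap X n f) → FullyExact f) :=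
  stmt18_general X hX n hn f
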